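/- arXiv:2510.10838 — 2 statements merged into one kernel-verified Lean document; each statement's English description precedes it below -/
import Mathlib

section
/- Let G be a median graph and Y a nonempty set of vertices of G. Then the convex hull of Y (the intersection of all convex sets of vertices containing Y) equals the intersection of all halfspaces of G containing Y (with the convention that this intersection is the whole vertex set if no halfspace contains Y). -/
/-- `m` is a median of `x`, `y`, `z` in the graph `G`. -/
def IsMedianOf {V : Type*} (G : SimpleGraph V) (m x y z : V) : Prop :=
  G.dist x y = G.dist x m + G.dist m y ∧
  G.dist y z = G.dist y m + G.dist m z ∧
  G.dist x z = G.dist x m + G.dist m z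

/-- A median graph: connected, and every triple of vertices has a unique median. -/
def MedianGraph {V : Type*} (G : SimpleGraph V) : Prop :=
  G.Connected ∧ ∀ x y z : V, ∃! m : V, IsMedianOf G m x y z

/-- A set `S` of vertices is convex: every vertex on a geodesic (a walk realizing
the graph distance) between two vertices of `S` belongs to `S`. -/
def ConvexSet {V : Type*} (G : SimpleGraph V) (S : Set V) : Prop :=
  ∀ u ∈ S, ∀ v ∈ S, ∀ w : G.Walk u v, w.length = G.dist u v → ∀ x ∈ w.support, x ∈ S

/-- Two edges are square-opposite: they are opposite sides of a 4-cycle. -/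
def SquareOpposite {V : Type*} (G : SimpleGraph V) (e f : Sym2 V) : Prop :=
  ∃ a b c d : V, a ≠ b ∧ a ≠ c ∧ a ≠ d ∧ b ≠ c ∧ b ≠ d ∧ c ≠ d ∧
    G.Adj a b ∧ G.Adj c d ∧ G.Adj a c ∧ G.Adj b d ∧ e = s(a, b) ∧ f = s(c, d)

/-- A hyperplane: an equivalence class of edges under the equivalence relation
generated by square-opposition. -/
def IsHyperplane {V : Type*} (G : SimpleGraph V) (H : Set (Sym2 V)) : Prop :=
  ∃ e ∈ G.edgeSet, H = {f | Relation.EqvGen (SquareOpposite G) e f}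

/-- A halfspace: the vertex set of a connected component of the graph obtained by
deleting the edges of a hyperplane. -/
def IsHalfspace {V : Type*} (G : SimpleGraph V) (A : Set V) : Prop :=
  ∃ H : Set (Sym2 V), IsHyperplane G H ∧
    ∃ c : (G.deleteEdges H).ConnectedComponent, A = c.supp

/-!
For an edge `ab` let `W_ab` be the set of vertices closer to `a` than to `b`. In a median graph
every vertex lies in exactly one of `W_ab` and `W_ba`, and the quadrangle condition together with
the absence of `K_{2,3}` shows that `W_ab` is convex: a geodesic stepping from `W_ab` into `W_ba`
can be pushed, square by square, towards `a` until its first edge is `ab` itself, which is absurd.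
By convexity every edge crossing from `W_ab` to `W_ba` induces the same split, so the hyperplane of
`ab` consists exactly of the crossing edges and its halfspaces are `W_ab` and `W_ba`. Halfspaces
are therefore convex; conversely, a vertex `x` outside a convex set `S` is separated from `S` by
`W_gu`, where `g` is a point of `S` nearest to `x` and `u` its neighbour towards `x`.
-/

open SimpleGraph

section

variable {V : Type*} {G : SimpleGraph V}

/-- Djoković's `W_ab`. -/
def closerTo (G : SimpleGraph V) (a b : V) : Set V := {x | G.dist x a < G.dist x b}

theorem mem_closerTo_self {a b : V} (hab : G.Adj a b) : a ∈ closerTo G a b := by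
  simp [closerTo, dist_eq_one_iff_adj.mpr hab]

theorem ne_of_mem_closerTo {a b x y : V} (hx : x ∈ closerTo G a b) (hy : y ∈ closerTo G b a) :
    x ≠ y := by
  rintro rfl
  exact lt_asymm (show G.dist x a < G.dist x b from hx) hy

theorem ConvexSet.mem_of_dist_add_dist_eq {S : Set V} (hS : ConvexSet G S) (hG : G.Connected)
    {u v x : V} (hu : u ∈ S) (hv : v ∈ S) (hx : G.dist u x + G.dist x v = G.dist u v) :
    x ∈ S := by
  obtain ⟨p, hp⟩ := hG.exists_walk_length_eq_dist u x
  obtain ⟨q, hq⟩ := hG.exists_walk_length_eq_dist x v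
  exact hS u hu v hv (p.append q) (by rw [Walk.length_append, hp, hq, hx]) x
    ((p.mem_support_append_iff q).mpr (Or.inl p.end_mem_support))

theorem SimpleGraph.Connected.exists_adj_dist_add_one_eq (hG : G.Connected) {u z : V}
    (hu : u ≠ z) : ∃ w, G.Adj u w ∧ G.dist w z + 1 = G.dist u z := by
  obtain ⟨p, hp⟩ := hG.exists_walk_length_eq_dist u z
  cases p with
  | nil => exact absurd rfl hu
  | @cons _ w _ huw q =>
    refine ⟨w, huw, le_antisymm ?_ ?_⟩
    · simpa [← hp] using dist_le q
    · have := hG.dist_triangle (u := u) (v := w) (w := z)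
      rwa [dist_eq_one_iff_adj.mpr huw, add_comm] at this

theorem SquareOpposite.symm {e f : Sym2 V} (h : SquareOpposite G e f) : SquareOpposite G f e := by
  obtain ⟨a, b, c, d, hab, hac, had, hbc, hbd, hcd, h1, h2, h3, h4, rfl, rfl⟩ := h
  exact ⟨c, d, a, b, hcd, hac.symm, hbc.symm, had.symm, hbd.symm, hab, h2, h1, h3.symm, h4.symm,
    rfl, rfl⟩

def crossingEdges (G : SimpleGraph V) (a b : V) : Set (Sym2 V) :=
  {e | ∃ u ∈ closerTo G a b, ∃ v ∈ closerTo G b a, G.Adj u v ∧ e = s(u, v)}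

theorem crossingEdges_comm (a b : V) : crossingEdges G a b = crossingEdges G b a := by
  ext e
  constructor <;> rintro ⟨u, hu, v, hv, huv, rfl⟩ <;>
    exact ⟨v, hv, u, hu, huv.symm, Sym2.eq_swap⟩

namespace MedianGraph

variable {a b c p q r u v w x y z : V}

theorem dist_add_one_eq_or (hG : MedianGraph G) (hab : G.Adj a b) (x : V) :
    G.dist x a + 1 = G.dist x b ∨ G.dist x b + 1 = G.dist x a := by
  obtain ⟨m, ⟨hxa, hab', hxb⟩, -⟩ := hG.2 x a b
  rw [dist_eq_one_iff_adj.mpr hab] at hab'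
  rcases Nat.add_eq_one_iff.mp hab'.symm with ⟨ham, -⟩ | ⟨-, hmb⟩
  · obtain rfl := hG.1.dist_eq_zero_iff.mp ham
    rw [dist_eq_one_iff_adj.mpr hab] at hxb
    omega
  · obtain rfl := hG.1.dist_eq_zero_iff.mp hmb
    rw [dist_eq_one_iff_adj.mpr hab.symm] at hxa
    omega

theorem dist_add_one_eq_or' (hG : MedianGraph G) (hab : G.Adj a b) (x : V) :
    G.dist a x + 1 = G.dist b x ∨ G.dist b x + 1 = G.dist a x := by
  simpa only [dist_comm (v := x)] using hG.dist_add_one_eq_or hab x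

theorem mem_closerTo_iff (hG : MedianGraph G) (hab : G.Adj a b) :
    x ∈ closerTo G a b ↔ G.dist x a + 1 = G.dist x b := by
  have := hG.dist_add_one_eq_or hab x
  change G.dist x a < G.dist x b ↔ _
  omega

theorem mem_closerTo_swap_iff (hG : MedianGraph G) (hab : G.Adj a b) :
    x ∈ closerTo G b a ↔ x ∉ closerTo G a b := by
  have := hG.dist_add_one_eq_or hab x
  change G.dist x b < G.dist x a ↔ ¬ G.dist x a < G.dist x b
  omega

theorem not_adj_of_adj_of_adj (hG : MedianGraph G) (hab : G.Adj a b) (hbc : G.Adj b c) :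
    ¬ G.Adj a c := fun hac => by
  have := hG.dist_add_one_eq_or hab c
  rw [dist_comm, dist_eq_one_iff_adj.mpr hac, dist_comm, dist_eq_one_iff_adj.mpr hbc] at this
  omega

theorem dist_eq_two (hG : MedianGraph G) (hxz : G.Adj x z) (hzy : G.Adj z y) (hxy : x ≠ y) :
    G.dist x y = 2 := by
  have := hG.1.dist_triangle (u := x) (v := z) (w := y)
  have := hG.1.one_lt_dist_of_ne_of_not_adj hxy (hG.not_adj_of_adj_of_adj hxz hzy)
  rw [dist_eq_one_iff_adj.mpr hxz, dist_eq_one_iff_adj.mpr hzy] at *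
  omega

/-- The quadrangle condition: the median of `v`, `w`, `z` is the required common neighbour. -/
theorem quadrangle (hG : MedianGraph G) (huv : G.Adj u v) (huw : G.Adj u w) (hvw : v ≠ w)
    (hv : G.dist v z + 1 = G.dist u z) (hw : G.dist w z + 1 = G.dist u z) :
    ∃ t, G.Adj v t ∧ G.Adj w t ∧ G.dist t z + 1 = G.dist v z := by
  obtain ⟨m, ⟨hvw', hwz, hvz⟩, -⟩ := hG.2 v w z
  rw [hG.dist_eq_two huv.symm huw hvw] at hvw'
  have hwm := dist_comm (G := G) (u := w) (v := m)
  have hmv : m ≠ v := by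
    rintro rfl
    rw [SimpleGraph.dist_self] at hvw'
    omega
  have hmw : m ≠ w := by
    rintro rfl
    rw [SimpleGraph.dist_self] at hvw'
    omega
  have := hG.1.pos_dist_of_ne hmv.symm
  have := hG.1.pos_dist_of_ne hmw
  exact ⟨m, dist_eq_one_iff_adj.mp (by omega), (dist_eq_one_iff_adj.mp (by omega)).symm,
    by omega⟩

/-- `K_{2,3}` is not a subgraph: `p` and `q` would both be medians of `x`, `y`, `z`. -/
theorem not_three_common_adj (hG : MedianGraph G) {p q : V} (hpq : p ≠ q)
    (hxy : x ≠ y) (hxz : x ≠ z) (hyz : y ≠ z) (hpx : G.Adj p x) (hpy : G.Adj p y)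
    (hpz : G.Adj p z) (hqx : G.Adj q x) (hqy : G.Adj q y) (hqz : G.Adj q z) : False := by
  have hmedian : ∀ r, G.Adj r x → G.Adj r y → G.Adj r z → IsMedianOf G r x y z :=
    fun r hx hy hz => by
      rw [IsMedianOf, hG.dist_eq_two hx.symm hy hxy, hG.dist_eq_two hy.symm hz hyz,
        hG.dist_eq_two hx.symm hz hxz, dist_eq_one_iff_adj.mpr hx.symm,
        dist_eq_one_iff_adj.mpr hy, dist_eq_one_iff_adj.mpr hy.symm,
        dist_eq_one_iff_adj.mpr hz]
      exact ⟨rfl, rfl, rfl⟩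
  obtain ⟨m, -, hm⟩ := hG.2 x y z
  exact hpq ((hm p (hmedian p hpx hpy hpz)).trans (hm q (hmedian q hqx hqy hqz)).symm)

theorem exists_square_of_crossing (hG : MedianGraph G) (hab : G.Adj a b) (huv : G.Adj u v)
    (hu : u ∈ closerTo G a b) (hv : v ∈ closerTo G b a) (hua : u ≠ a) :
    ∃ w t, G.Adj u w ∧ G.Adj v t ∧ G.Adj w t ∧ G.dist w a + 1 = G.dist u a ∧
      w ∈ closerTo G a b ∧ t ∈ closerTo G b a := by
  rw [hG.mem_closerTo_iff hab] at hu
  rw [hG.mem_closerTo_iff hab.symm] at hv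
  obtain ⟨w, huw, hwa⟩ := hG.1.exists_adj_dist_add_one_eq hua
  have := hG.dist_add_one_eq_or' huv a
  have := hG.dist_add_one_eq_or' huv b
  have := hG.dist_add_one_eq_or' huw b
  have := hG.dist_add_one_eq_or hab w
  have hvw : v ≠ w := by rintro rfl; omega
  obtain ⟨t, hvt, hwt, htb⟩ := hG.quadrangle (z := b) huv huw hvw (by omega) (by omega)
  have := hG.dist_add_one_eq_or hab t
  have := hG.dist_add_one_eq_or' hvt a
  exact ⟨w, t, huw, hvt, hwt, hwa, (hG.mem_closerTo_iff hab).mpr (by omega),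
    (hG.mem_closerTo_iff hab.symm).mpr (by omega)⟩

theorem mem_closerTo_of_adj_of_dist_add_one_eq (hG : MedianGraph G) (hab : G.Adj a b)
    (hv : v ∈ closerTo G a b) (hu : u ∈ closerTo G a b) (hux : G.Adj u x)
    (hxv : G.dist x v + 1 = G.dist u v) : x ∈ closerTo G a b := by
  induction hk : G.dist u a using Nat.strong_induction_on generalizing u x with
  | _ k ih =>
  by_contra hx
  rw [← hG.mem_closerTo_swap_iff hab] at hx
  by_cases hua : u = a
  · subst hua
    rw [hG.mem_closerTo_iff hab.symm, dist_eq_one_iff_adj.mpr hux.symm] at hx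
    obtain rfl : x = b := hG.1.dist_eq_zero_iff.mp (by omega)
    rw [hG.mem_closerTo_iff hab, dist_comm, dist_comm (u := v)] at hv
    omega
  -- the edge `wt` opposite to `ux` in a square crosses too, nearer to `a`, and still points
  -- towards `v`: the induction hypothesis applies to it
  obtain ⟨w, t, huw, hxt, hwt, hwa, hw, ht⟩ := hG.exists_square_of_crossing hab hux hu hx hua
  have hwx : w ≠ x := ne_of_mem_closerTo hw hx
  have hut : u ≠ t := ne_of_mem_closerTo hu ht
  have htv : G.dist t v + 1 = G.dist w v := by
    by_contra htv
    have := hG.dist_add_one_eq_or' huw v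
    have := hG.dist_add_one_eq_or' hwt v
    have := hG.dist_add_one_eq_or' hxt v
    -- otherwise `w`, `x` would have a third common neighbour `m`, closer to `v`
    obtain ⟨m, hwm, hxm, hmv⟩ := hG.quadrangle huw hux hwx (by omega) hxv
    exact hG.not_three_common_adj hwx hut (by rintro rfl; omega) (by rintro rfl; omega)
      huw.symm hwt hwm hux.symm hxt hxm
  exact ne_of_mem_closerTo (ih _ (by omega) hw hwt htv rfl) ht rfl

theorem convexSet_closerTo (hG : MedianGraph G) (hab : G.Adj a b) :
    ConvexSet G (closerTo G a b) := by
  intro u hu v hv p hp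
  induction p with
  | nil => simpa using hu
  | @cons u x v hux p ih =>
    rw [Walk.length_cons] at hp
    have hxv : G.dist x v + 1 = G.dist u v := by
      have := dist_le p
      have := hG.1.dist_triangle (u := u) (v := x) (w := v)
      rw [dist_eq_one_iff_adj.mpr hux] at this
      omega
    have hx := hG.mem_closerTo_of_adj_of_dist_add_one_eq hab hv hu hux hxv
    intro y hy
    rcases List.mem_cons.mp (Walk.support_cons hux p ▸ hy) with rfl | hy
    · exact hu
    · exact ih hx hv (by omega) y hy

theorem mem_closerTo_of_adj (hG : MedianGraph G) (hpq : G.Adj p q) (hrp : G.Adj r p)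
    (hrq : r ≠ q) : r ∈ closerTo G p q := by
  change G.dist r p < G.dist r q
  rw [dist_eq_one_iff_adj.mpr hrp, hG.dist_eq_two hrp hpq hrq]
  omega

theorem closerTo_subset_of_crossing (hG : MedianGraph G) (hab : G.Adj a b) (huv : G.Adj u v)
    (hu : u ∈ closerTo G a b) (hv : v ∈ closerTo G b a) :
    closerTo G a b ⊆ closerTo G u v := by
  intro x hx
  by_contra hxu
  rw [← hG.mem_closerTo_swap_iff huv, hG.mem_closerTo_iff huv.symm] at hxu
  -- `v` lies on a geodesic from `x` to `u`, both in the convex set `W_ab`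
  have : v ∈ closerTo G a b := (hG.convexSet_closerTo hab).mem_of_dist_add_dist_eq hG.1 hx hu
    (by rw [dist_eq_one_iff_adj.mpr huv.symm]; exact hxu)
  exact ne_of_mem_closerTo this hv rfl

theorem closerTo_eq_of_crossing (hG : MedianGraph G) (hab : G.Adj a b) (huv : G.Adj u v)
    (hu : u ∈ closerTo G a b) (hv : v ∈ closerTo G b a) : closerTo G u v = closerTo G a b := by
  refine Set.Subset.antisymm (fun x hx => ?_) (hG.closerTo_subset_of_crossing hab huv hu hv)
  by_contra hxa
  rw [← hG.mem_closerTo_swap_iff hab] at hxa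
  exact ne_of_mem_closerTo hx (hG.closerTo_subset_of_crossing hab.symm huv.symm hv hu hxa) rfl

theorem mem_crossingEdges_of_squareOpposite (hG : MedianGraph G) (hab : G.Adj a b)
    {e f : Sym2 V} (h : SquareOpposite G e f) (he : e ∈ crossingEdges G a b) :
    f ∈ crossingEdges G a b := by
  obtain ⟨p, q, r, s, -, -, hps, hqr, -, -, hpq, hrs, hpr, hqs, rfl, rfl⟩ := h
  obtain ⟨u, hu, v, hv, -, he⟩ := he
  have hr : r ∈ closerTo G p q := hG.mem_closerTo_of_adj hpq hpr.symm hqr.symm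
  have hs : s ∈ closerTo G q p := hG.mem_closerTo_of_adj hpq.symm hqs.symm hps.symm
  rcases Sym2.eq_iff.mp he with ⟨rfl, rfl⟩ | ⟨rfl, rfl⟩
  · rw [hG.closerTo_eq_of_crossing hab hpq hu hv] at hr
    rw [hG.closerTo_eq_of_crossing hab.symm hpq.symm hv hu] at hs
    exact ⟨r, hr, s, hs, hrs, rfl⟩
  · rw [hG.closerTo_eq_of_crossing hab hpq.symm hu hv] at hs
    rw [hG.closerTo_eq_of_crossing hab.symm hpq hv hu] at hr
    exact ⟨s, hs, r, hr, hrs.symm, Sym2.eq_swap⟩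

theorem mem_crossingEdges_iff_of_eqvGen (hG : MedianGraph G) (hab : G.Adj a b) {e f : Sym2 V}
    (h : Relation.EqvGen (SquareOpposite G) e f) :
    e ∈ crossingEdges G a b ↔ f ∈ crossingEdges G a b := by
  induction h with
  | rel e f h => exact ⟨hG.mem_crossingEdges_of_squareOpposite hab h,
      hG.mem_crossingEdges_of_squareOpposite hab h.symm⟩
  | refl => exact .rfl
  | symm _ _ _ ih => exact ih.symm
  | trans _ _ _ _ _ ih₁ ih₂ => exact ih₁.trans ih₂

theorem eqvGen_of_mem_crossingEdges (hG : MedianGraph G) (hab : G.Adj a b) {f : Sym2 V}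
    (hf : f ∈ crossingEdges G a b) : Relation.EqvGen (SquareOpposite G) s(a, b) f := by
  obtain ⟨u, hu, v, hv, huv, rfl⟩ := hf
  induction hk : G.dist u a using Nat.strong_induction_on generalizing u v with
  | _ k ih =>
  by_cases hua : u = a
  · subst hua
    rw [hG.mem_closerTo_iff hab.symm, dist_eq_one_iff_adj.mpr huv.symm] at hv
    obtain rfl : v = b := hG.1.dist_eq_zero_iff.mp (by omega)
    exact .refl _
  obtain ⟨w, t, huw, hvt, hwt, hwa, hw, ht⟩ := hG.exists_square_of_crossing hab huv hu hv hua
  refine (ih _ (by omega) _ hw _ ht hwt rfl).trans _ _ _ (.rel _ _ ?_)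
  exact ⟨w, t, u, v, hwt.ne, huw.ne.symm, ne_of_mem_closerTo hw hv,
    (ne_of_mem_closerTo hu ht).symm, hvt.ne.symm, huv.ne, hwt, huv, huw.symm, hvt.symm, rfl, rfl⟩

theorem setOf_eqvGen_squareOpposite_eq_crossingEdges (hG : MedianGraph G) (hab : G.Adj a b) :
    {f | Relation.EqvGen (SquareOpposite G) s(a, b) f} = crossingEdges G a b :=
  Set.ext fun _ => ⟨fun hf => (hG.mem_crossingEdges_iff_of_eqvGen hab hf).mp
    ⟨_, mem_closerTo_self hab, _, mem_closerTo_self hab.symm, hab, rfl⟩,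
    hG.eqvGen_of_mem_crossingEdges hab⟩

theorem isHyperplane_iff (hG : MedianGraph G) {H : Set (Sym2 V)} :
    IsHyperplane G H ↔ ∃ a b, G.Adj a b ∧ H = crossingEdges G a b := by
  constructor
  · rintro ⟨e, he, rfl⟩
    induction e using Sym2.ind with
    | _ a b => exact ⟨a, b, he, hG.setOf_eqvGen_squareOpposite_eq_crossingEdges he⟩
  · rintro ⟨a, b, hab, rfl⟩
    exact ⟨s(a, b), hab, (hG.setOf_eqvGen_squareOpposite_eq_crossingEdges hab).symm⟩

theorem reachable_deleteEdges_crossingEdges_iff (hG : MedianGraph G) (hab : G.Adj a b)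
    (hx : x ∈ closerTo G a b) :
    (G.deleteEdges (crossingEdges G a b)).Reachable x y ↔ y ∈ closerTo G a b := by
  constructor
  · rw [reachable_iff_reflTransGen]
    intro h
    induction h with
    | refl => exact hx
    | tail _ hyz ih =>
      rw [deleteEdges_adj] at hyz
      by_contra hz
      rw [← hG.mem_closerTo_swap_iff hab] at hz
      exact hyz.2 ⟨_, ih, _, hz, hyz.1, rfl⟩
  · intro hy
    obtain ⟨p, hp⟩ := hG.1.exists_walk_length_eq_dist x y
    have hsupp := hG.convexSet_closerTo hab x hx y hy p hp
    refine (p.toDeleteEdges _ fun e he hcross => ?_).reachable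
    obtain ⟨u, -, v, hv, -, rfl⟩ := hcross
    exact ne_of_mem_closerTo (hsupp v (p.snd_mem_support_of_mem_edges he)) hv rfl

theorem supp_connectedComponentMk_deleteEdges_crossingEdges (hG : MedianGraph G)
    (hab : G.Adj a b) (hx : x ∈ closerTo G a b) :
    ((G.deleteEdges (crossingEdges G a b)).connectedComponentMk x).supp = closerTo G a b := by
  ext y
  rw [ConnectedComponent.mem_supp_iff, ConnectedComponent.eq, reachable_comm]
  exact hG.reachable_deleteEdges_crossingEdges_iff hab hx

theorem isHalfspace_iff (hG : MedianGraph G) {A : Set V} :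
    IsHalfspace G A ↔ ∃ a b, G.Adj a b ∧ A = closerTo G a b := by
  constructor
  · rintro ⟨H, hH, c, rfl⟩
    obtain ⟨a, b, hab, rfl⟩ := hG.isHyperplane_iff.mp hH
    induction c using ConnectedComponent.ind with
    | _ x =>
    by_cases hx : x ∈ closerTo G a b
    · exact ⟨a, b, hab, hG.supp_connectedComponentMk_deleteEdges_crossingEdges hab hx⟩
    · rw [← hG.mem_closerTo_swap_iff hab] at hx
      have := hG.supp_connectedComponentMk_deleteEdges_crossingEdges hab.symm hx
      rw [crossingEdges_comm b a] at this
      exact ⟨b, a, hab.symm, this⟩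
  · rintro ⟨a, b, hab, rfl⟩
    exact ⟨_, hG.isHyperplane_iff.mpr ⟨a, b, hab, rfl⟩, _,
      (hG.supp_connectedComponentMk_deleteEdges_crossingEdges hab (mem_closerTo_self hab)).symm⟩

/-- The separating edge joins a point of `S` nearest to `x` to its neighbour towards `x`. -/
theorem exists_closerTo_of_not_mem (hG : MedianGraph G) {S : Set V} (hS : ConvexSet G S)
    (hne : S.Nonempty) (hx : x ∉ S) :
    ∃ a b, G.Adj a b ∧ S ⊆ closerTo G a b ∧ x ∈ closerTo G b a := by
  set g := Function.argminOn (G.dist x) S hne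
  have hg : g ∈ S := Function.argminOn_mem _ _ _
  have hmin : ∀ s ∈ S, G.dist x g ≤ G.dist x s :=
    fun s hs => not_lt.mp (Function.not_lt_argminOn _ _ hs)
  obtain ⟨u, hgu, hux⟩ := hG.1.exists_adj_dist_add_one_eq (ne_of_mem_of_not_mem hg hx)
  rw [dist_comm, dist_comm (u := g)] at hux
  have hu : u ∉ S := fun hu => by have := hmin u hu; omega
  refine ⟨g, u, hgu, fun s hs => ?_, (hG.mem_closerTo_iff hgu.symm).mpr hux⟩
  by_contra hsg
  rw [← hG.mem_closerTo_swap_iff hgu, hG.mem_closerTo_iff hgu.symm] at hsg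
  exact hu (hS.mem_of_dist_add_dist_eq hG.1 hs hg (by rwa [dist_eq_one_iff_adj.mpr hgu.symm]))

end MedianGraph

end

/-- In a median graph, the convex hull of a nonempty set of vertices equals the
intersection of all halfspaces containing it. -/
theorem convexHull_eq_sInter_halfspaces {V : Type*} (G : SimpleGraph V)
    (hG : MedianGraph G) (Y : Set V) (hY : Y.Nonempty) :
    ⋂₀ {S : Set V | ConvexSet G S ∧ Y ⊆ S} = ⋂₀ {A : Set V | IsHalfspace G A ∧ Y ⊆ A} := by
  ext x
  simp only [Set.mem_sInter, Set.mem_ofPred_eq]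
  constructor
  · rintro hx A ⟨hA, hYA⟩
    obtain ⟨a, b, hab, rfl⟩ := hG.isHalfspace_iff.mp hA
    exact hx _ ⟨hG.convexSet_closerTo hab, hYA⟩
  · rintro hx S ⟨hS, hYS⟩
    by_contra hxS
    obtain ⟨a, b, hab, hSab, hxba⟩ := hG.exists_closerTo_of_not_mem hS (hY.mono hYS) hxS
    have hxab := hx _ ⟨hG.isHalfspace_iff.mpr ⟨a, b, hab, rfl⟩, hYS.trans hSab⟩
    exact ne_of_mem_closerTo hxab hxba rfl
end

section
/- Let G be a finitely generated group acting by automorphisms on a median graph 𝒢 of finite dimension, i.e., such that there is d ∈ ℕ with every set of pairwise transverse hyperplanes of 𝒢 having at most d elements. If every element of G fixes some vertex of 𝒢, then every G-orbit is bounded: for every vertex x there is N ∈ ℕ with dist(x, g·x) ≤ N for all g ∈ G. -/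
/-- Two distinct hyperplanes are transverse if some 4-cycle contains an edge of each. -/
def Transverse {V : Type*} (G : SimpleGraph V) (H₁ H₂ : Set (Sym2 V)) : Prop :=
  H₁ ≠ H₂ ∧ ∃ a b c d : V, a ≠ b ∧ a ≠ c ∧ a ≠ d ∧ b ≠ c ∧ b ≠ d ∧ c ≠ d ∧
    G.Adj a b ∧ G.Adj b c ∧ G.Adj c d ∧ G.Adj d a ∧
    (∃ e ∈ ({s(a, b), s(b, c), s(c, d), s(d, a)} : Set (Sym2 V)), e ∈ H₁) ∧
    (∃ e ∈ ({s(a, b), s(b, c), s(c, d), s(d, a)} : Set (Sym2 V)), e ∈ H₂)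

open Pointwise

namespace SimpleGraph

variable {V W : Type*} {G : SimpleGraph V} {u v : V} {n : ℕ}

lemma exists_adj_dist_eq_of_dist_eq_add_one (h : G.dist u v = n + 1) :
    ∃ w, G.Adj u w ∧ G.dist w v = n := by
  obtain ⟨p, hp⟩ := exists_walk_of_dist_ne_zero (by omega : G.dist u v ≠ 0)
  cases p with
  | nil => simp at h
  | @cons _ w _ huw q =>
    refine ⟨w, huw, le_antisymm ?_ ?_⟩
    · have := dist_le q
      simp only [Walk.length_cons] at hp
      omega
    · have := huw.reachable.dist_triangle_left v
      rw [dist_eq_one_iff_adj.mpr huw] at this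
      omega

lemma Adj.dist_le_dist_add_one {w : V} (h : G.Adj v w) (u : V) :
    G.dist u w ≤ G.dist u v + 1 :=
  dist_eq_one_iff_adj.mpr h ▸ h.reachable.dist_triangle_right u

lemma Hom.edist_le {G' : SimpleGraph W} (f : G →g G') (u v : V) :
    G'.edist (f u) (f v) ≤ G.edist u v := by
  by_cases h : G.Reachable u v
  · obtain ⟨p, hp⟩ := h.exists_walk_length_eq_edist
    rw [← hp, ← Walk.length_map f]
    exact SimpleGraph.edist_le _
  · rw [edist_eq_top_of_not_reachable h]
    exact le_top

lemma Iso.dist_eq {G' : SimpleGraph W} (f : G ≃g G') (u v : V) :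
    G'.dist (f u) (f v) = G.dist u v := by
  refine congrArg ENat.toNat (le_antisymm (f.toHom.edist_le u v) ?_)
  simpa using f.symm.toHom.edist_le (f u) (f v)

variable (G)

def halfspace (a b : V) : Set V := {w | G.dist w a < G.dist w b}

def IsHalfspace (A : Set V) : Prop := ∃ a b, G.Adj a b ∧ A = G.halfspace a b

def separatingHalfspaces (u v : V) : Set (Set V) := {A | G.IsHalfspace A ∧ u ∈ A ∧ v ∉ A}

def hyperplaneOf (e : Sym2 V) : Set (Sym2 V) := {f | Relation.EqvGen (SquareOpposite G) e f}

def halfspacesOf (e : Sym2 V) : Set (Set V) :=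
  Sym2.lift ⟨fun a b => {G.halfspace a b, G.halfspace b a}, fun _ _ => Set.pair_comm _ _⟩ e

variable {G}

lemma mem_halfspace {a b w : V} : w ∈ G.halfspace a b ↔ G.dist w a < G.dist w b := Iff.rfl

lemma left_mem_halfspace {a b : V} (hab : G.Adj a b) : a ∈ G.halfspace a b := by
  simp [mem_halfspace, dist_eq_one_iff_adj.mpr hab]

lemma right_notMem_halfspace (a b : V) : b ∉ G.halfspace a b := by
  simp [mem_halfspace]

lemma halfspacesOf_mk (a b : V) : G.halfspacesOf s(a, b) = {G.halfspace a b, G.halfspace b a} :=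
  rfl

lemma isHyperplane_hyperplaneOf {e : Sym2 V} (he : e ∈ G.edgeSet) :
    IsHyperplane G (G.hyperplaneOf e) :=
  ⟨e, he, rfl⟩

section Action

variable {Γ : Type*} [Group Γ] [MulAction Γ V] {A : Set V}

lemma dist_smul_smul (hact : ∀ (g : Γ) (u v : V), G.Adj u v ↔ G.Adj (g • u) (g • v)) (g : Γ)
    (u v : V) : G.dist (g • u) (g • v) = G.dist u v :=
  Iso.dist_eq ⟨MulAction.toPerm g, (hact g _ _).symm⟩ u v

lemma smul_halfspace (hact : ∀ (g : Γ) (u v : V), G.Adj u v ↔ G.Adj (g • u) (g • v)) (g : Γ)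
    (a b : V) : g • G.halfspace a b = G.halfspace (g • a) (g • b) := by
  ext w
  rw [Set.mem_smul_set_iff_inv_smul_mem, mem_halfspace, mem_halfspace,
    ← dist_smul_smul hact g⁻¹ w, ← dist_smul_smul hact g⁻¹ w, inv_smul_smul, inv_smul_smul]

lemma IsHalfspace.smul (hact : ∀ (g : Γ) (u v : V), G.Adj u v ↔ G.Adj (g • u) (g • v))
    (hA : G.IsHalfspace A) (g : Γ) : G.IsHalfspace (g • A) := by
  obtain ⟨a, b, hab, rfl⟩ := hA
  exact ⟨g • a, g • b, (hact g a b).mp hab, smul_halfspace hact g a b⟩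

lemma exists_smul_mem_separatingHalfspaces
    (hact : ∀ (g : Γ) (u v : V), G.Adj u v ↔ G.Adj (g • u) (g • v)) {T : Set Γ} {g : Γ}
    (hg : g ∈ Submonoid.closure T) {x : V} {A : Set V}
    (hA : A ∈ G.separatingHalfspaces (g • x) x) :
    ∃ h : Γ, ∃ s ∈ T, h • A ∈ G.separatingHalfspaces (s • x) x := by
  induction hg using Submonoid.closure_induction generalizing A with
  | mem s hs => exact ⟨1, s, hs, by rwa [one_smul]⟩
  | one => exact absurd (one_smul Γ x ▸ hA.2.1) hA.2.2
  | mul g₁ g₂ _ _ ih₁ ih₂ =>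
    by_cases h₁ : g₁ • x ∈ A
    · exact ih₁ ⟨hA.1, h₁, hA.2.2⟩
    · obtain ⟨h, s, hs, hh⟩ := ih₂ (A := g₁⁻¹ • A) ⟨IsHalfspace.smul hact hA.1 _,
        by rw [Set.mem_smul_set_iff_inv_smul_mem, inv_inv, ← mul_smul]; exact hA.2.1,
        by rwa [Set.mem_smul_set_iff_inv_smul_mem, inv_inv]⟩
      exact ⟨h * g₁⁻¹, s, hs, by rwa [mul_smul]⟩

end Action

end SimpleGraph

namespace MedianGraph

open SimpleGraph

variable {V : Type*} {G : SimpleGraph V} {a b c d p q r u v w x y z : V} {n : ℕ}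
  {A B : Set V}

lemma dist_eq_add_one_or_of_adj (hG : MedianGraph G) (hab : G.Adj a b) (w : V) :
    G.dist w b = G.dist w a + 1 ∨ G.dist w a = G.dist w b + 1 := by
  obtain ⟨m, h₁, h₂, h₃⟩ := (hG.2 a b w).exists
  have hab₁ := dist_eq_one_iff_adj.mpr hab
  have hba₁ := dist_eq_one_iff_adj.mpr hab.symm
  rw [SimpleGraph.dist_comm (u := w) (v := a), SimpleGraph.dist_comm (u := w) (v := b)]
  rcases Nat.add_eq_one_iff.mp (hab₁ ▸ h₁).symm with ⟨ham, -⟩ | ⟨-, hmb⟩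
  · obtain rfl := hG.1.dist_eq_zero_iff.mp ham
    omega
  · obtain rfl := hG.1.dist_eq_zero_iff.mp hmb
    omega

lemma not_adj_of_adj_of_adj_s12 (hG : MedianGraph G) (hxz : G.Adj x z) (hzy : G.Adj z y) :
    ¬ G.Adj x y := fun hxy => by
  have h₁ := dist_eq_one_iff_adj.mpr hxz.symm
  have h₂ := dist_eq_one_iff_adj.mpr hzy
  rcases hG.dist_eq_add_one_or_of_adj hxy z with h | h <;> omega

lemma dist_eq_two_of_adj_of_adj (hG : MedianGraph G) (hxz : G.Adj x z) (hzy : G.Adj z y)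
    (hne : x ≠ y) : G.dist x y = 2 := by
  have := hG.1.one_lt_dist_of_ne_of_not_adj hne (hG.not_adj_of_adj_of_adj_s12 hxz hzy)
  have := hG.1.dist_triangle (u := x) (v := z) (w := y)
  rw [dist_eq_one_iff_adj.mpr hxz, dist_eq_one_iff_adj.mpr hzy] at this
  omega

/-- The quadrangle condition. -/
lemma exists_adj_adj_dist_eq (hG : MedianGraph G) (hxy : G.dist x y = 2)
    (hx : G.dist z x = n + 1) (hy : G.dist z y = n + 1) :
    ∃ m, G.Adj x m ∧ G.Adj m y ∧ G.dist z m = n := by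
  obtain ⟨m, h₁, h₂, h₃⟩ := (hG.2 z x y).exists
  have := SimpleGraph.dist_comm (G := G) (u := x) (v := m)
  have hxm : G.dist x m = 1 := by omega
  have hmy : G.dist m y = 1 := by omega
  exact ⟨m, dist_eq_one_iff_adj.mp hxm, dist_eq_one_iff_adj.mp hmy, by omega⟩

/-- Both `x` and `y` are medians of `u`, `v`, `w`. -/
lemma eq_of_adj_three (hG : MedianGraph G) (hxu : G.Adj x u) (hxv : G.Adj x v) (hxw : G.Adj x w)
    (hyu : G.Adj y u) (hyv : G.Adj y v) (hyw : G.Adj y w) (huv : u ≠ v) (huw : u ≠ w)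
    (hvw : v ≠ w) : x = y := by
  have h₁ := hG.dist_eq_two_of_adj_of_adj hxu.symm hxv huv
  have h₂ := hG.dist_eq_two_of_adj_of_adj hxv.symm hxw hvw
  have h₃ := hG.dist_eq_two_of_adj_of_adj hxu.symm hxw huw
  have e := fun {s t : V} (h : G.Adj s t) => dist_eq_one_iff_adj.mpr h
  exact (hG.2 u v w).unique
    ⟨by rw [h₁, e hxu.symm, e hxv], by rw [h₂, e hxv.symm, e hxw], by rw [h₃, e hxu.symm, e hxw]⟩
    ⟨by rw [h₁, e hyu.symm, e hyv], by rw [h₂, e hyv.symm, e hyw], by rw [h₃, e hyu.symm, e hyw]⟩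

lemma mem_halfspace_iff (hG : MedianGraph G) (hab : G.Adj a b) :
    w ∈ G.halfspace a b ↔ G.dist w b = G.dist w a + 1 := by
  rw [mem_halfspace]
  rcases hG.dist_eq_add_one_or_of_adj hab w with h | h <;> omega

lemma notMem_halfspace_iff (hG : MedianGraph G) (hab : G.Adj a b) :
    w ∉ G.halfspace a b ↔ G.dist w a = G.dist w b + 1 := by
  rw [mem_halfspace]
  rcases hG.dist_eq_add_one_or_of_adj hab w with h | h <;> omega

lemma halfspace_swap_eq_compl (hG : MedianGraph G) (hab : G.Adj a b) :
    G.halfspace b a = (G.halfspace a b)ᶜ := by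
  ext w
  rw [Set.mem_compl_iff, hG.notMem_halfspace_iff hab, hG.mem_halfspace_iff hab.symm]

lemma isHalfspace_compl (hG : MedianGraph G) (hA : G.IsHalfspace A) : G.IsHalfspace Aᶜ := by
  obtain ⟨a, b, hab, rfl⟩ := hA
  exact ⟨b, a, hab.symm, (hG.halfspace_swap_eq_compl hab).symm⟩

/-- A vertex on the `a`-side of `ab` and the `d`-side of `cd` would give `a` and `d` three
common neighbours: `b`, `c`, and a median of `a`, `d` and that vertex. -/
lemma halfspace_subset_of_square (hG : MedianGraph G) (hab : G.Adj a b) (hcd : G.Adj c d)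
    (hac : G.Adj a c) (hbd : G.Adj b d) (hbc : b ≠ c) (had : a ≠ d) :
    G.halfspace a b ⊆ G.halfspace c d := by
  intro w hw
  by_contra hw'
  rw [hG.mem_halfspace_iff hab] at hw
  rw [hG.notMem_halfspace_iff hcd] at hw'
  have := hac.dist_le_dist_add_one w
  have := hbd.symm.dist_le_dist_add_one w
  obtain ⟨n, hn⟩ : ∃ n, G.dist w a = n + 1 := by
    refine Nat.exists_eq_succ_of_ne_zero fun h => had ?_
    obtain rfl := hG.1.dist_eq_zero_iff.mp h
    exact hG.1.dist_eq_zero_iff.mp (by omega)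
  obtain ⟨m, ham, hmd, hmw⟩ := hG.exists_adj_adj_dist_eq
    (hG.dist_eq_two_of_adj_of_adj hab hbd had) hn (by omega)
  have hbm : b ≠ m := fun h => by rw [← h] at hmw; omega
  have hcm : c ≠ m := fun h => by rw [← h] at hmw; omega
  exact had (hG.eq_of_adj_three hab hac ham hbd.symm hcd.symm hmd.symm hbc hbm hcm)

lemma halfspace_eq_of_square (hG : MedianGraph G) (hab : G.Adj a b) (hcd : G.Adj c d)
    (hac : G.Adj a c) (hbd : G.Adj b d) (hbc : b ≠ c) (had : a ≠ d) :
    G.halfspace a b = G.halfspace c d :=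
  (hG.halfspace_subset_of_square hab hcd hac hbd hbc had).antisymm
    (hG.halfspace_subset_of_square hcd hab hac.symm hbd.symm had.symm hbc.symm)

lemma halfspacesOf_eq_of_eqvGen (hG : MedianGraph G) {e f : Sym2 V}
    (h : Relation.EqvGen (SquareOpposite G) e f) : G.halfspacesOf e = G.halfspacesOf f := by
  induction h with
  | rel e f hef =>
    obtain ⟨a, b, c, d, -, -, had, hbc, -, -, hab, hcd, hac, hbd, rfl, rfl⟩ := hef
    rw [halfspacesOf_mk, halfspacesOf_mk, hG.halfspace_eq_of_square hab hcd hac hbd hbc had,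
      hG.halfspace_eq_of_square hab.symm hcd.symm hbd hac had hbc]
  | refl => rfl
  | symm _ _ _ ih => exact ih.symm
  | trans _ _ _ _ _ ih₁ ih₂ => exact ih₁.trans ih₂

lemma halfspace_eq_or_eq_compl (hG : MedianGraph G) (hab : G.Adj a b)
    (h : s(c, d) ∈ G.hyperplaneOf s(a, b)) :
    G.halfspace c d = G.halfspace a b ∨ G.halfspace c d = (G.halfspace a b)ᶜ := by
  have hmem : G.halfspace c d ∈ G.halfspacesOf s(a, b) := by
    rw [hG.halfspacesOf_eq_of_eqvGen h, halfspacesOf_mk]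
    exact Or.inl rfl
  rwa [halfspacesOf_mk, hG.halfspace_swap_eq_compl hab] at hmem

/-- One rung of the ladder: `p'` is a neighbour of `p` closer to `a`, and the median of `p'`,
`q` and `b` completes the square. -/
lemma exists_squareOpposite_of_crossing (hG : MedianGraph G) (hab : G.Adj a b)
    (hpq : G.Adj p q) (hp : p ∈ G.halfspace a b) (hq : q ∉ G.halfspace a b)
    (hk : G.dist a p = n + 1) :
    ∃ p' q', G.Adj p' q' ∧ p' ∈ G.halfspace a b ∧ q' ∉ G.halfspace a b ∧ G.dist a p' = n ∧
      SquareOpposite G s(p', q') s(p, q) := by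
  have e := fun {s t : V} => SimpleGraph.dist_comm (G := G) (u := s) (v := t)
  rw [hG.mem_halfspace_iff hab, e, e (s := p)] at hp
  rw [hG.notMem_halfspace_iff hab, e, e (s := q)] at hq
  have := hpq.dist_le_dist_add_one a
  have := hpq.symm.dist_le_dist_add_one b
  obtain ⟨p', hpp', hp'a⟩ := exists_adj_dist_eq_of_dist_eq_add_one (e ▸ hk)
  rw [e] at hp'a
  have := hpp'.dist_le_dist_add_one b
  have := hpp'.symm.dist_le_dist_add_one b
  have hp'b := hab.dist_le_dist_add_one p'
  rw [e, e (s := p')] at hp'b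
  have hp'q : p' ≠ q := fun h => by rw [h] at hp'a; omega
  obtain ⟨q', hp'q', hq'q, hq'b⟩ := hG.exists_adj_adj_dist_eq
    (hG.dist_eq_two_of_adj_of_adj hpp'.symm hpq hp'q) (z := b) (n := n) (by omega) (by omega)
  have := hq'q.dist_le_dist_add_one a
  refine ⟨p', q', hp'q', by rw [mem_halfspace, e, e (s := p')]; omega,
    by rw [mem_halfspace, e, e (s := q')]; omega, hp'a,
    p', q', p, q, hp'q'.ne, hpp'.ne.symm, hp'q, fun h => ?_, hq'q.ne, hpq.ne,
    hp'q', hpq, hpp'.symm, hq'q, rfl, rfl⟩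
  rw [h] at hq'b
  omega

lemma mem_hyperplaneOf_of_crossing (hG : MedianGraph G) (hab : G.Adj a b) (hpq : G.Adj p q)
    (hp : p ∈ G.halfspace a b) (hq : q ∉ G.halfspace a b) :
    s(p, q) ∈ G.hyperplaneOf s(a, b) := by
  obtain ⟨n, hn⟩ : ∃ n, G.dist a p = n := ⟨_, rfl⟩
  induction n generalizing p q with
  | zero =>
    obtain rfl := hG.1.dist_eq_zero_iff.mp hn
    rw [hG.notMem_halfspace_iff hab, SimpleGraph.dist_comm, dist_eq_one_iff_adj.mpr hpq] at hq
    obtain rfl := hG.1.dist_eq_zero_iff.mp (by omega : G.dist q b = 0)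
    exact Relation.EqvGen.refl _
  | succ n ih =>
    obtain ⟨p', q', hp'q', hp', hq', hp'a, hsq⟩ :=
      hG.exists_squareOpposite_of_crossing hab hpq hp hq hn
    exact (ih hp'q' hp' hq' hp'a).trans _ _ _ (Relation.EqvGen.rel _ _ hsq)

lemma halfspace_eq_of_crossing (hG : MedianGraph G) (hab : G.Adj a b) (hpq : G.Adj p q)
    (hp : p ∈ G.halfspace a b) (hq : q ∉ G.halfspace a b) :
    G.halfspace p q = G.halfspace a b := by
  refine (hG.halfspace_eq_or_eq_compl hab
    (hG.mem_hyperplaneOf_of_crossing hab hpq hp hq)).resolve_right fun h => ?_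
  have := left_mem_halfspace hpq
  rw [h] at this
  exact this hp

lemma separatingHalfspaces_subset (hG : MedianGraph G) (p : G.Walk u v) :
    G.separatingHalfspaces u v ⊆ {A | A ∈ p.darts.map fun e => G.halfspace e.fst e.snd} := by
  rintro A ⟨⟨a, b, hab, rfl⟩, hu, hv⟩
  obtain ⟨e, he, hfst, hsnd⟩ := p.exists_boundary_dart _ hu hv
  exact List.mem_map.mpr ⟨e, he, hG.halfspace_eq_of_crossing hab e.adj hfst hsnd⟩

lemma finite_separatingHalfspaces (hG : MedianGraph G) :
    (G.separatingHalfspaces u v).Finite :=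
  (List.finite_toSet _).subset (hG.separatingHalfspaces_subset (hG.1.preconnected u v).some)

lemma ncard_separatingHalfspaces_le (hG : MedianGraph G) :
    (G.separatingHalfspaces u v).ncard ≤ G.dist u v := by
  classical
  obtain ⟨p, hp⟩ := hG.1.exists_walk_length_eq_dist u v
  set l := p.darts.map fun e => G.halfspace e.fst e.snd
  calc (G.separatingHalfspaces u v).ncard
      ≤ {A | A ∈ l}.ncard := Set.ncard_le_ncard (hG.separatingHalfspaces_subset p) l.finite_toSet
    _ = l.toFinset.card := by rw [← List.coe_toFinset, Set.ncard_coe_finset]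
    _ ≤ l.length := l.toFinset_card_le
    _ = G.dist u v := by rw [List.length_map, Walk.length_darts, hp]

/-- Stepping from `u` to a neighbour `w` closer to `v` loses exactly the halfspace of `uw`. -/
lemma dist_le_ncard_separatingHalfspaces (hG : MedianGraph G) (u v : V) :
    G.dist u v ≤ (G.separatingHalfspaces u v).ncard := by
  obtain ⟨n, hn⟩ : ∃ n, G.dist u v = n := ⟨_, rfl⟩
  induction n generalizing u with
  | zero => omega
  | succ n ih =>
    obtain ⟨w, huw, hwv⟩ := exists_adj_dist_eq_of_dist_eq_add_one hn
    have hv : v ∉ G.halfspace u w := by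
      rw [mem_halfspace, SimpleGraph.dist_comm, hn, SimpleGraph.dist_comm, hwv]
      omega
    have hsub : insert (G.halfspace u w) (G.separatingHalfspaces w v) ⊆
        G.separatingHalfspaces u v := by
      rintro A (rfl | ⟨⟨a, b, hab, rfl⟩, hwA, hvA⟩)
      · exact ⟨⟨u, w, huw, rfl⟩, left_mem_halfspace huw, hv⟩
      · refine ⟨⟨a, b, hab, rfl⟩, by_contra fun huA => ?_, hvA⟩
        rw [← hG.halfspace_eq_of_crossing hab huw.symm hwA huA,
          hG.halfspace_swap_eq_compl huw] at hvA
        exact hvA hv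
    have hw : G.halfspace u w ∉ G.separatingHalfspaces w v := fun h =>
      right_notMem_halfspace u w h.2.1
    rw [hn]
    calc n + 1 ≤ (G.separatingHalfspaces w v).ncard + 1 := by have := ih w hwv; omega
      _ = (insert (G.halfspace u w) (G.separatingHalfspaces w v)).ncard :=
        (Set.ncard_insert_of_notMem hw hG.finite_separatingHalfspaces).symm
      _ ≤ (G.separatingHalfspaces u v).ncard :=
        Set.ncard_le_ncard hsub hG.finite_separatingHalfspaces

lemma ncard_separatingHalfspaces (hG : MedianGraph G) (u v : V) :
    (G.separatingHalfspaces u v).ncard = G.dist u v :=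
  hG.ncard_separatingHalfspaces_le.antisymm (hG.dist_le_ncard_separatingHalfspaces u v)

/-- Halfspaces are convex: otherwise `A` would separate `u` from `z` without separating `u` from
`v`, and counting separating halfspaces gives `d(u, v) < d(u, z) + d(z, v)`. -/
lemma mem_of_dist_add_dist_eq (hG : MedianGraph G) (hA : G.IsHalfspace A) (hu : u ∈ A)
    (hv : v ∈ A) (hz : G.dist u z + G.dist z v = G.dist u v) : z ∈ A := by
  by_contra hzA
  have hsub : G.separatingHalfspaces u v ⊆
      (G.separatingHalfspaces u z ∪ G.separatingHalfspaces z v) \ {A} := by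
    rintro B ⟨hB, huB, hvB⟩
    refine ⟨?_, fun h => hvB (h ▸ hv)⟩
    by_cases hzB : z ∈ B
    · exact Or.inr ⟨hB, hzB, hvB⟩
    · exact Or.inl ⟨hB, huB, hzB⟩
  have hfin := hG.finite_separatingHalfspaces (u := u) (v := z) |>.union
    (hG.finite_separatingHalfspaces (u := z) (v := v))
  have := calc G.dist u v = (G.separatingHalfspaces u v).ncard :=
        (hG.ncard_separatingHalfspaces u v).symm
    _ ≤ ((G.separatingHalfspaces u z ∪ G.separatingHalfspaces z v) \ {A}).ncard :=
        Set.ncard_le_ncard hsub hfin.sdiff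
    _ < (G.separatingHalfspaces u z ∪ G.separatingHalfspaces z v).ncard :=
        Set.ncard_sdiff_singleton_lt_of_mem (Or.inl ⟨hA, hu, hzA⟩) hfin
    _ ≤ (G.separatingHalfspaces u z).ncard + (G.separatingHalfspaces z v).ncard :=
        Set.ncard_union_le _ _
    _ ≤ G.dist u z + G.dist z v :=
        add_le_add hG.ncard_separatingHalfspaces_le hG.ncard_separatingHalfspaces_le
  omega

/-- Step from `q` towards the median of `q`, `r` and a point of `A ∩ B`; convexity keeps the
step in `A`, and minimality of `d(q, r)` puts it in `B`. -/
lemma exists_adj_mem_inter_of_forall_dist_le (hG : MedianGraph G) (hA : G.IsHalfspace A)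
    (hB : G.IsHalfspace B) (hq : q ∈ A \ B) (hr : r ∈ B \ A) (hAB : (A ∩ B).Nonempty)
    (hmin : ∀ q' ∈ A \ B, ∀ r' ∈ B \ A, G.dist q r ≤ G.dist q' r') :
    ∃ y, G.Adj q y ∧ y ∈ A ∩ B ∧ G.dist y r + 1 = G.dist q r := by
  obtain ⟨p, hpA, hpB⟩ := hAB
  obtain ⟨m, hqr, hrp, hqp⟩ := (hG.2 q r p).exists
  have hmA : m ∈ A := hG.mem_of_dist_add_dist_eq hA hq.1 hpA hqp.symm
  have hmB : m ∈ B := hG.mem_of_dist_add_dist_eq hB hr.1 hpB hrp.symm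
  obtain ⟨k, hk⟩ : ∃ k, G.dist q m = k + 1 :=
    Nat.exists_eq_succ_of_ne_zero fun h => hq.2 (hG.1.dist_eq_zero_iff.mp h ▸ hmB)
  obtain ⟨y, hqy, hym⟩ := exists_adj_dist_eq_of_dist_eq_add_one hk
  have hyA : y ∈ A := hG.mem_of_dist_add_dist_eq hA hq.1 hmA (by
    rw [dist_eq_one_iff_adj.mpr hqy, hym, hk, add_comm])
  have := hG.1.dist_triangle (u := y) (v := m) (w := r)
  have hqr' := hqy.symm.dist_le_dist_add_one r
  rw [SimpleGraph.dist_comm (u := r), SimpleGraph.dist_comm (u := r)] at hqr'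
  have hyr : G.dist y r + 1 = G.dist q r := by omega
  refine ⟨y, hqy, ⟨hyA, by_contra fun hyB => ?_⟩, hyr⟩
  have := hmin y ⟨hyA, hyB⟩ r hr
  omega

/-- A pair `q ∈ A \ B`, `r ∈ B \ A` at minimal distance has neighbours `y ∈ A ∩ B` and
`y' ∈ Aᶜ ∩ Bᶜ` of `q`, both one step closer to `r`; the quadrangle condition closes `y q y'` into
a square. -/
theorem transverse_hyperplaneOf (hG : MedianGraph G) (hab : G.Adj a b) (hcd : G.Adj c d)
    (h₁ : (G.halfspace a b ∩ G.halfspace c d).Nonempty)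
    (h₂ : (G.halfspace a b \ G.halfspace c d).Nonempty)
    (h₃ : (G.halfspace c d \ G.halfspace a b).Nonempty)
    (h₄ : ((G.halfspace a b)ᶜ ∩ (G.halfspace c d)ᶜ).Nonempty) :
    Transverse G (G.hyperplaneOf s(a, b)) (G.hyperplaneOf s(c, d)) := by
  set A := G.halfspace a b
  set B := G.halfspace c d
  have hA : G.IsHalfspace A := ⟨a, b, hab, rfl⟩
  have hB : G.IsHalfspace B := ⟨c, d, hcd, rfl⟩
  obtain ⟨⟨q, r⟩, ⟨hq, hr⟩, hmin⟩ :=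
    (measure fun x : V × V => G.dist x.1 x.2).wf.has_min ((A \ B) ×ˢ (B \ A)) (h₂.prod h₃)
  dsimp only at hq hr
  have hmin' : ∀ q' ∈ A \ B, ∀ r' ∈ B \ A, G.dist q r ≤ G.dist q' r' :=
    fun q' hq' r' hr' => not_lt.mp (hmin (q', r') ⟨hq', hr'⟩)
  obtain ⟨y, hqy, ⟨hyA, hyB⟩, hyr⟩ :=
    hG.exists_adj_mem_inter_of_forall_dist_le hA hB hq hr h₁ hmin'
  obtain ⟨y', hqy', ⟨hy'B, hy'A⟩, hy'r⟩ := hG.exists_adj_mem_inter_of_forall_dist_le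
    (hG.isHalfspace_compl hB) (hG.isHalfspace_compl hA) (by rwa [compl_sdiff_compl])
    (by rwa [compl_sdiff_compl]) (by rwa [Set.inter_comm] at h₄)
    (by rwa [compl_sdiff_compl, compl_sdiff_compl])
  have hyy' : y ≠ y' := fun h => hy'B (h ▸ hyB)
  obtain ⟨n, hn⟩ : ∃ n, G.dist r y = n + 1 :=
    Nat.exists_eq_succ_of_ne_zero fun h => hr.2 (hG.1.dist_eq_zero_iff.mp h ▸ hyA)
  obtain ⟨μ, hyμ, hμy', hμr⟩ := hG.exists_adj_adj_dist_eq
    (hG.dist_eq_two_of_adj_of_adj hqy.symm hqy' hyy') hn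
    (by rw [SimpleGraph.dist_comm] at hn ⊢; omega)
  have hqμ : q ≠ μ := fun h => by
    rw [← h, SimpleGraph.dist_comm] at hμr
    rw [SimpleGraph.dist_comm] at hn
    omega
  refine ⟨fun h => ?_, q, y, μ, y', hqy.ne, hqμ, hqy'.ne, hyμ.ne, hyy', hμy'.ne,
    hqy, hyμ, hμy', hqy'.symm, ⟨s(y', q), by simp, ?_⟩, ⟨s(q, y), by simp, ?_⟩⟩
  · have hcd' : s(c, d) ∈ G.hyperplaneOf s(a, b) := h ▸ Relation.EqvGen.refl _
    obtain ⟨z, hzA, hzB⟩ := h₂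
    obtain ⟨w, hwA, hwB⟩ := h₁
    rcases hG.halfspace_eq_or_eq_compl hab hcd' with hBA | hBA
    · rw [show B = A from hBA] at hzB
      exact hzB hzA
    · rw [show B = Aᶜ from hBA] at hwB
      exact hwB hwA
  · rw [show s(y', q) = s(q, y') from Sym2.eq_swap]
    exact hG.mem_hyperplaneOf_of_crossing hab hqy' hq.1 hy'A
  · rw [show s(q, y) = s(y, q) from Sym2.eq_swap]
    exact hG.mem_hyperplaneOf_of_crossing hcd hqy.symm hyB hq.2

lemma ncard_le_of_pairwise_not_subset (hG : MedianGraph G) {k : ℕ}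
    (hdim : ∀ T : Set (Set (Sym2 V)), (∀ H ∈ T, IsHyperplane G H) →
      T.Pairwise (Transverse G) → T.Finite ∧ T.ncard ≤ k)
    {𝒜 : Set (Set V)} (h𝒜 : 𝒜 ⊆ G.separatingHalfspaces u v)
    (hnest : 𝒜.Pairwise fun A B => ¬ A ⊆ B) : 𝒜.ncard ≤ k := by
  have hedge : ∀ A ∈ 𝒜, ∃ e : V × V, G.Adj e.1 e.2 ∧ A = G.halfspace e.1 e.2 := fun A hA => by
    obtain ⟨a, b, hab, rfl⟩ := (h𝒜 hA).1
    exact ⟨(a, b), hab, rfl⟩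
  have : Nonempty (V × V) := ⟨(u, v)⟩
  choose! e he hAe using hedge
  set hyp : Set V → Set (Sym2 V) := fun A => G.hyperplaneOf s((e A).1, (e A).2)
  have hinj : Set.InjOn hyp 𝒜 := fun A hA B hB hAB => by
    have hmem : s((e B).1, (e B).2) ∈ hyp A := hAB ▸ Relation.EqvGen.refl _
    rcases hG.halfspace_eq_or_eq_compl (he A hA) hmem with h | h <;>
      rw [← hAe A hA, ← hAe B hB] at h
    · exact h.symm
    · have huB := (h𝒜 hB).2.1
      rw [h] at huB
      exact absurd (h𝒜 hA).2.1 huB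
  have htrans : (hyp '' 𝒜).Pairwise (Transverse G) := by
    rintro _ ⟨A, hA, rfl⟩ _ ⟨B, hB, rfl⟩ hne
    have hAB : A ≠ B := fun h => hne (h ▸ rfl)
    have key := hG.transverse_hyperplaneOf (he A hA) (he B hB)
    rw [← hAe A hA, ← hAe B hB] at key
    exact key ⟨u, (h𝒜 hA).2.1, (h𝒜 hB).2.1⟩ (Set.not_subset.mp (hnest hA hB hAB))
      (Set.not_subset.mp (hnest hB hA hAB.symm)) ⟨v, (h𝒜 hA).2.2, (h𝒜 hB).2.2⟩
  rw [← hinj.ncard_image]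
  exact (hdim _ (by rintro _ ⟨A, hA, rfl⟩; exact isHyperplane_hyperplaneOf (he A hA)) htrans).2

section Action

variable {Γ : Type*} [Group Γ] [MulAction Γ V]

/-- The translates `gⁿ • A` would form a strictly decreasing sequence of halfspaces, all
separating the fixed vertex `v` from a vertex outside `A`. -/
lemma not_smul_ssubset_of_mem (hG : MedianGraph G)
    (hact : ∀ (g : Γ) (u v : V), G.Adj u v ↔ G.Adj (g • u) (g • v)) (hA : G.IsHalfspace A)
    {g : Γ} (hv : g • v = v) (hvA : v ∈ A) : ¬ g • A ⊂ A := by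
  intro hgA
  obtain ⟨a, b, hab, rfl⟩ := hA
  have hanti : StrictAnti fun n : ℕ => g ^ n • G.halfspace a b :=
    strictAnti_nat_of_succ_lt fun n => by
      simpa only [pow_succ, mul_smul, Set.ssubset_def, Set.smul_set_subset_smul_set_iff] using hgA
  have hmem : ∀ n : ℕ, g ^ n • G.halfspace a b ∈ G.separatingHalfspaces v b := fun n =>
    ⟨IsHalfspace.smul hact ⟨a, b, hab, rfl⟩ _,
      MulAction.mem_stabilizer_iff.mp (pow_mem (MulAction.mem_stabilizer_iff.mpr hv) n) ▸
        Set.smul_mem_smul_set hvA,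
      fun hb => right_notMem_halfspace a b (by simpa using hanti.antitone (Nat.zero_le n) hb)⟩
  exact Set.infinite_of_injective_forall_mem hanti.injective hmem hG.finite_separatingHalfspaces

lemma not_smul_ssubset (hG : MedianGraph G)
    (hact : ∀ (g : Γ) (u v : V), G.Adj u v ↔ G.Adj (g • u) (g • v)) (hA : G.IsHalfspace A)
    {g : Γ} (hv : g • v = v) : ¬ g • A ⊂ A := by
  intro hgA
  by_cases hvA : v ∈ A
  · exact hG.not_smul_ssubset_of_mem hact hA hv hvA hgA
  refine hG.not_smul_ssubset_of_mem hact (hG.isHalfspace_compl hA) (inv_smul_eq_iff.mpr hv.symm)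
    hvA ?_
  rw [Set.ssubset_def] at hgA
  rw [Set.smul_set_compl]
  refine compl_lt_compl_iff_lt.mpr ⟨?_, ?_⟩
  · rw [← Set.smul_set_subset_smul_set_iff (a := g), smul_inv_smul]
    exact hgA.1
  · rw [← Set.smul_set_subset_smul_set_iff (a := g), smul_inv_smul]
    exact hgA.2

end Action

theorem dist_smul_le (hG : MedianGraph G) {k : ℕ}
    (hdim : ∀ T : Set (Set (Sym2 V)), (∀ H ∈ T, IsHyperplane G H) →
      T.Pairwise (Transverse G) → T.Finite ∧ T.ncard ≤ k)
    {Γ : Type*} [Group Γ] [MulAction Γ V]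
    (hact : ∀ (g : Γ) (u v : V), G.Adj u v ↔ G.Adj (g • u) (g • v))
    (hell : ∀ g : Γ, ∃ v : V, g • v = v) {S : Set Γ} (hS : Submonoid.closure S = ⊤)
    (hSfin : S.Finite) (x : V) (g : Γ) :
    G.dist (g • x) x ≤ k * (⋃ s ∈ S, G.separatingHalfspaces (s • x) x).ncard := by
  classical
  set 𝒰 := ⋃ s ∈ S, G.separatingHalfspaces (s • x) x
  have h𝒰 : 𝒰.Finite := hSfin.biUnion fun s _ => hG.finite_separatingHalfspaces
  have h𝒜 : (G.separatingHalfspaces (g • x) x).Finite := hG.finite_separatingHalfspaces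
  have htrans : ∀ A ∈ G.separatingHalfspaces (g • x) x, ∃ h : Γ, h • A ∈ 𝒰 := fun A hA => by
    obtain ⟨h, s, hs, hh⟩ :=
      exists_smul_mem_separatingHalfspaces hact (hS ▸ Submonoid.mem_top g) hA
    exact ⟨h, Set.mem_biUnion hs hh⟩
  choose! φ hφ using htrans
  by_contra! hlt
  rw [← hG.ncard_separatingHalfspaces, Set.ncard_eq_toFinset_card _ h𝒜,
    Set.ncard_eq_toFinset_card _ h𝒰, mul_comm] at hlt
  obtain ⟨B, -, hfiber⟩ := Finset.exists_lt_card_fiber_of_mul_lt_card_of_maps_to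
    (f := fun A => φ A • A) (fun A hA => h𝒰.mem_toFinset.mpr (hφ A (h𝒜.mem_toFinset.mp hA))) hlt
  refine hfiber.not_ge ?_
  rw [← Set.ncard_coe_finset]
  refine hG.ncard_le_of_pairwise_not_subset hdim (u := g • x) (v := x) (fun A hA => ?_)
    fun A hA A' hA' hne hAA' => ?_
  · simp only [Finset.coe_filter, Set.mem_ofPred_eq] at hA
    exact h𝒜.mem_toFinset.mp hA.1
  · simp only [Finset.coe_filter, Set.mem_ofPred_eq] at hA hA'
    have hφA : ((φ A')⁻¹ * φ A) • A = A' := by rw [mul_smul, hA.2, ← hA'.2, inv_smul_smul]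
    obtain ⟨v, hv⟩ := hell ((φ A')⁻¹ * φ A)⁻¹
    refine hG.not_smul_ssubset hact (h𝒜.mem_toFinset.mp hA'.1).1 hv ?_
    rw [inv_smul_eq_iff.mpr hφA.symm]
    exact Set.ssubset_iff_subset_ne.mpr ⟨hAA', hne⟩

end MedianGraph

/-- A finitely generated group acting purely elliptically on a finite dimensional
median graph has all its orbits bounded. -/
theorem purely_elliptic_bounded_orbits_finite_dim {V : Type*} (𝒢 : SimpleGraph V)
    (hG : MedianGraph 𝒢) (d : ℕ)
    (hdim : ∀ T : Set (Set (Sym2 V)), (∀ H ∈ T, IsHyperplane 𝒢 H) →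
      T.Pairwise (Transverse 𝒢) → T.Finite ∧ T.ncard ≤ d)
    {Γ : Type*} [Group Γ] [Group.FG Γ] [MulAction Γ V]
    (hact : ∀ (g : Γ) (u v : V), 𝒢.Adj u v ↔ 𝒢.Adj (g • u) (g • v))
    (hell : ∀ g : Γ, ∃ v : V, g • v = v) :
    ∀ x : V, ∃ N : ℕ, ∀ g : Γ, 𝒢.dist x (g • x) ≤ N := by
  intro x
  obtain ⟨S, hS, hSfin⟩ := Monoid.fg_iff.mp (inferInstance : Monoid.FG Γ)
  exact ⟨_, fun g => SimpleGraph.dist_comm.trans_le (hG.dist_smul_le hdim hact hell hS hSfin x g)⟩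
end
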